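/- arXiv:2105.06313 — 3 statements merged into one kernel-verified Lean document; each statement's English description precedes it below -/
import Mathlib

section
/- If all agents have the same working partition (W_i = W_j for all i, j), then at every state x, the event E(x) = {x' : f_i(x') = f_i(x) for all i} is common knowledge at x, i.e., the block of the meet of the information partitions containing x is a subset of E(x). -/
/-- The block of the partition (setoid) `P` containing `x`. -/
def blk {X : Type*} (P : Setoid X) (x : X) : Set X := {y | P x y}

/-- The message sent at state `x` by an agent with information `P`,
given the message function `f`. -/
def msg {X A : Type*} (f : Set X → A) (P : Setoid X) (x : X) : A := f (blk P x)

/-- The working partition of `P` induced by the message function `f`: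
two states are equivalent iff the same message is sent at them. -/
def wp {X A : Type*} (f : Set X → A) (P : Setoid X) : Setoid X := Setoid.ker (msg f P)

/-- The sure thing principle: for any nonempty `S` and any partition of `S`
into nonempty blocks all mapped by `f` to `a`, `f S = a`. -/
def STPred {X A : Type*} (f : Set X → A) : Prop :=
  ∀ (S : Set X) (C : Set (Set X)) (a : A), S.Nonempty →
    (∀ B ∈ C, B.Nonempty) → C.PairwiseDisjoint id → ⋃₀ C = S →
    (∀ B ∈ C, f B = a) → f S = a

open scoped Classical in
/- The update function on profiles of partitions induced by the graph `G`:
if `i` has senders, `i` refines her partition by joining (in the refinement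
order: `⊓` in the `Setoid` order, which is the coarsest common refinement)
with the working partitions of all her senders; else her partition stays put.
Note: in the `Setoid` order, smaller = finer, so the paper's coarsening order
`P ≤ Q` ("Q refines P") is `Q ≤ P` here, the paper's join is `⊓`, and the
paper's meet is `⊔`. -/
noncomputable def update {X A I : Type*} (f : Set X → A) (G : I → I → Prop)
    (P : I → Setoid X) (i : I) : Setoid X :=
  if (∃ j, G j i) then ⨅ j ∈ {j | G j i}, (P i ⊓ wp f (P j)) else P i

theorem blk_eq_of_rel {X : Type*} (P : Setoid X) {x y : X} (h : P x y) : blk P x = blk P y :=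
  Set.ext fun _ => ⟨P.trans (P.symm h), P.trans h⟩

theorem le_wp {X A : Type*} (f : Set X → A) (P : Setoid X) : P ≤ wp f P :=
  fun _ _ h => congrArg f (blk_eq_of_rel P h)

theorem iSup_le_wp_of_wp_eq {X A I : Type*} (f : Set X → A) (P : I → Setoid X)
    (hW : ∀ i j, wp f (P i) = wp f (P j)) (j : I) : ⨆ i, P i ≤ wp f (P j) :=
  iSup_le fun i => hW i j ▸ le_wp f (P i)

theorem stmt_2_general {X A I : Type*} (f : Set X → A)
    (P : I → Setoid X) (hW : ∀ i j, wp f (P i) = wp f (P j)) :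
    ∀ x : X, blk (⨆ i, P i) x ⊆ {x' | ∀ i, msg f (P i) x' = msg f (P i) x} :=
  fun _ _ hy i => (iSup_le_wp_of_wp_eq f P hW i hy).symm

/-- If all agents have the same working partition, then at every state `x`
the event `E(x) = {x' : fᵢ(x') = fᵢ(x) for all i}` is common knowledge at `x`
(the block of the meet of the information partitions — `⨆` in the `Setoid` order —
containing `x` is contained in `E(x)`). -/
theorem stmt_2 {X A I : Type*} [Fintype I] [Nonempty I] (f : Set X → A)
    (P : I → Setoid X) (hW : ∀ i j, wp f (P i) = wp f (P j)) :
    ∀ x : X, blk (⨆ i, P i) x ⊆ {x' | ∀ i, msg f (P i) x' = msg f (P i) x} :=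
  stmt_2_general f P hW
end

section
/- Any well-ordered chain (with respect to the refinement order) in the lattice of partitions of a set X has cardinality at most |X| (when X is infinite; more precisely a strictly increasing chain of partitions of X has cardinality at most |X| + 1, and at most |X| if X is infinite). -/
def Setoid.toSetProd (X : Type*) : Setoid X ↪o Set (X × X) where
  toFun r := {p | r p.1 p.2}
  inj' _ _ h := Setoid.ext fun x y => Set.ext_iff.1 h (x, y)
  map_rel_iff' := ⟨fun h x y hxy => @h (x, y) hxy, fun h _ hp => h hp⟩

section ChainOfSets

universe u

variable {α β : Type u} [PartialOrder β] {C : Set β}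

theorem IsChain.exists_notMem_forall_mem_of_lt (f : β ↪o Set α) (hC : IsChain (· ≤ ·) C)
    (hwf : C.WellFoundedOn (· < ·)) {b b' : β} (hb' : b' ∈ C) (hlt : b < b') :
    ∃ a ∉ f b, ∀ c ∈ C, b < c → a ∈ f c := by
  -- `m` is the successor of `b` in `C`
  obtain ⟨m, hm⟩ := (hwf.subset fun c (hc : c ∈ C ∧ b < c) => hc.1).exists_minimal
    (⟨b', hb', hlt⟩ : ∃ c, c ∈ C ∧ b < c)
  have hm_le : ∀ c ∈ C, b < c → m ≤ c := fun c hc hbc =>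
    (hC.total hm.1.1 hc).elim id fun hcm => hm.2 ⟨hc, hbc⟩ hcm
  obtain ⟨a, ham, hab⟩ := Set.not_subset.1 fun h => hm.1.2.not_ge (f.le_iff_le.1 h)
  exact ⟨a, hab, fun c hc hbc => f.monotone (hm_le c hc hbc) ham⟩

theorem IsChain.mk_le_of_wellFoundedOn (f : β ↪o Set α) (hC : IsChain (· ≤ ·) C)
    (hwf : C.WellFoundedOn (· < ·)) : Cardinal.mk C ≤ Cardinal.mk α + 1 := by
  classical
  have hstep := fun (b : C) (h : ∃ b' ∈ C, (b : β) < b') =>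
    hC.exists_notMem_forall_mem_of_lt f hwf h.choose_spec.1 h.choose_spec.2
  choose w hw_notMem hw_mem using hstep
  let g : C → Option α := fun b => if h : ∃ b' ∈ C, (b : β) < b' then some (w b h) else none
  have hg_ne : ∀ b c : C, (b : β) < c → g b ≠ g c := by
    intro b c hbc
    have hb : ∃ b' ∈ C, (b : β) < b' := ⟨c, c.2, hbc⟩
    by_cases hc : ∃ b' ∈ C, (c : β) < b'
    · simp only [g, dif_pos hb, dif_pos hc, ne_eq, Option.some.injEq]
      exact fun h => hw_notMem c hc (h ▸ hw_mem b hb c c.2 hbc)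
    · simp [g, dif_pos hb, dif_neg hc]
  have hg : Function.Injective g := by
    intro b c hbc
    by_contra hne
    have hne' : (b : β) ≠ c := Subtype.coe_ne_coe.2 hne
    rcases hC.total b.2 c.2 with h | h
    · exact hg_ne b c (h.lt_of_ne hne') hbc
    · exact hg_ne c b (h.lt_of_ne hne'.symm) hbc.symm
  exact Cardinal.mk_option (α := α) ▸ Cardinal.mk_le_of_injective hg

end ChainOfSets

/-- Any strictly increasing well-ordered chain of partitions of an
infinite set `X` has cardinality at most `|X|`. -/
theorem stmt_11 {X : Type*} [Infinite X] (C : Set (Setoid X))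
    (hchain : IsChain (· ≤ ·) C) (hwo : C.WellFoundedOn (· < ·)) :
    Cardinal.mk C ≤ Cardinal.mk X := by
  calc Cardinal.mk C ≤ Cardinal.mk (X × X) + 1 :=
        IsChain.mk_le_of_wellFoundedOn (Setoid.toSetProd X) hchain hwo
    _ = Cardinal.mk X := by
        rw [Cardinal.mk_prod, Cardinal.lift_id, Cardinal.mul_eq_self (Cardinal.aleph0_le_mk X),
          Cardinal.mk_add_one_eq]
end

section
/- There exists a three-state example showing that common knowledge of the profile of messages at every state does not imply equality of working partitions: with X = {x,y,z}, f({x}) = f({y}) = a, f({z}) = f({x,y}) = b, P_1 discrete and P_2 = {{x,y},{z}}, the profile of messages is common knowledge at every state but W_1 ≠ W_2. -/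
/-! Take `a = false`, `b = true`, with `f S = true` iff `S` contains `2` or both `0` and `1`.
Both blocks `{0,1}` and `{2}` of `P₂` get `b`, so `W₂` is trivial, while `W₁ = {{0,1},{2}}`.
Since `P₁` is discrete, the meet is `P₂`, and the profile is constant on each block of `P₂`. -/

theorem msg_eq_of_rel {X A : Type*} (f : Set X → A) (P : Setoid X) {x y : X} (h : P x y) :
    msg f P y = msg f P x := by
  have hblk : blk P y = blk P x := Set.ext fun _ => ⟨P.trans h, P.trans (P.symm h)⟩
  rw [msg, msg, hblk]

theorem blk_bot {X : Type*} (x : X) : blk ⊥ x = {x} :=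
  Set.ext fun _ => eq_comm

theorem msg_bot {X A : Type*} (f : Set X → A) (x : X) : msg f ⊥ x = f {x} := by
  rw [msg, blk_bot]

open scoped Classical in
noncomputable def twoOrZeroOne (S : Set (Fin 3)) : Bool :=
  decide (2 ∈ S ∨ (0 ∈ S ∧ 1 ∈ S))

theorem twoOrZeroOne_singleton (x : Fin 3) : twoOrZeroOne {x} = decide (x = 2) := by
  fin_cases x <;> simp [twoOrZeroOne]

theorem twoOrZeroOne_pair : twoOrZeroOne {0, 1} = true := by
  simp [twoOrZeroOne]

theorem msg_twoOrZeroOne_ker (x : Fin 3) :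
    msg twoOrZeroOne (Setoid.ker (fun y : Fin 3 => y = 2)) x = true := by
  fin_cases x <;> simp [msg, blk, twoOrZeroOne, Setoid.ker_def]

/-- A three-state example: with `P₁` discrete and `P₂ = {{0,1},{2}}`,
the profile of messages is common knowledge at every state, but the working
partitions differ. -/
theorem stmt_15 :
    ∃ (f : Set (Fin 3) → Bool) (a b : Bool), a ≠ b ∧
      f {0} = a ∧ f {1} = a ∧ f {2} = b ∧ f {0, 1} = b ∧
      (∀ x, blk ((⊥ : Setoid (Fin 3)) ⊔ Setoid.ker (fun y : Fin 3 => y = 2)) x ⊆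
        {x' | msg f (⊥ : Setoid (Fin 3)) x' = msg f (⊥ : Setoid (Fin 3)) x ∧
              msg f (Setoid.ker (fun y : Fin 3 => y = 2)) x' =
                msg f (Setoid.ker (fun y : Fin 3 => y = 2)) x}) ∧
      wp f (⊥ : Setoid (Fin 3)) ≠ wp f (Setoid.ker (fun y : Fin 3 => y = 2)) := by
  refine ⟨twoOrZeroOne, false, true, Bool.false_ne_true, by simp [twoOrZeroOne_singleton],
    by simp [twoOrZeroOne_singleton], by simp [twoOrZeroOne_singleton], twoOrZeroOne_pair,
    fun x y hy => ?_, fun hwp => ?_⟩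
  · rw [bot_sup_eq] at hy
    refine ⟨?_, msg_eq_of_rel _ _ hy⟩
    rw [msg_bot, msg_bot, twoOrZeroOne_singleton, twoOrZeroOne_singleton]
    exact decide_eq_decide.mpr (Iff.of_eq hy).symm
  · have h02 : wp twoOrZeroOne (Setoid.ker (fun y : Fin 3 => y = 2)) 0 2 :=
      (msg_twoOrZeroOne_ker 0).trans (msg_twoOrZeroOne_ker 2).symm
    rw [← hwp] at h02
    have h : msg twoOrZeroOne ⊥ 0 = msg twoOrZeroOne ⊥ 2 := h02
    simp [msg_bot, twoOrZeroOne_singleton] at h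
end
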